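/- arXiv:1712.05735 — 6 statements merged into one kernel-verified Lean document; each statement's English description precedes it below -/
import Mathlib

section
/- For every Boolean function f:{0,1}^n→{0,1}, the alternation of f is at most 2^{DT(f)+1} − 1, where DT(f) is the minimum decision tree depth of f. -/
open Finset

/-- The maximal chain in the Boolean hypercube corresponding to a permutation `σ`:
its `k`-th element is the point whose `i`-th coordinate is `1` iff `σ i < k`. -/
def chainOf {n : ℕ} (σ : Equiv.Perm (Fin n)) (k : Fin (n + 1)) : Fin n → Bool :=
  fun i => decide ((σ i : ℕ) < (k : ℕ))

/-- The number of alternations of `f` along the chain of `σ`. -/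
def altOn {n : ℕ} (f : (Fin n → Bool) → Bool) (σ : Equiv.Perm (Fin n)) : ℕ :=
  (Finset.univ.filter fun k : Fin n =>
    f (chainOf σ k.castSucc) ≠ f (chainOf σ k.succ)).card

/-- The alternation of a Boolean function: the maximum number of value changes
along any maximal chain from `0^n` to `1^n`. -/
def alt {n : ℕ} (f : (Fin n → Bool) → Bool) : ℕ :=
  Finset.univ.sup (altOn f)

/-- The number of decreases (`1 → 0` changes) of `f` along the chain of `σ`. -/
def dcOn {n : ℕ} (f : (Fin n → Bool) → Bool) (σ : Equiv.Perm (Fin n)) : ℕ :=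
  (Finset.univ.filter fun k : Fin n =>
    f (chainOf σ k.castSucc) = true ∧ f (chainOf σ k.succ) = false).card

/-- The decrease of a Boolean function: the maximum number of `1 → 0` changes
along any maximal chain from `0^n` to `1^n`. -/
def dc {n : ℕ} (f : (Fin n → Bool) → Bool) : ℕ :=
  Finset.univ.sup (dcOn f)

/-- Deterministic decision trees on `n` Boolean variables. -/
inductive DTree (n : ℕ) : Type where
  | leaf : Bool → DTree n
  | node : Fin n → DTree n → DTree n → DTree n

namespace DTree

/-- Evaluation of a decision tree on an input. -/
def eval {n : ℕ} : DTree n → (Fin n → Bool) → Bool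
  | leaf b, _ => b
  | node i t0 t1, x => if x i then eval t1 x else eval t0 x

/-- Depth of a decision tree. -/
def depth {n : ℕ} : DTree n → ℕ
  | leaf _ => 0
  | node _ t0 t1 => max (depth t0) (depth t1) + 1

end DTree

/-- Minimum depth of a deterministic decision tree computing `f`. -/
noncomputable def DT {n : ℕ} (f : (Fin n → Bool) → Bool) : ℕ :=
  sInf {d | ∃ t : DTree n, (∀ x, t.eval x = f x) ∧ t.depth = d}

/-- Flip the `i`-th bit of `x`. -/
def flipBit {n : ℕ} (x : Fin n → Bool) (i : Fin n) : Fin n → Bool :=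
  Function.update x i (!x i)

/-- Sensitivity of `f` at `x`. -/
def sensAt {n : ℕ} (f : (Fin n → Bool) → Bool) (x : Fin n → Bool) : ℕ :=
  (Finset.univ.filter fun i => f (flipBit x i) ≠ f x).card

/-- Sensitivity of `f`. -/
def sens {n : ℕ} (f : (Fin n → Bool) → Bool) : ℕ :=
  Finset.univ.sup fun x : Fin n → Bool => sensAt f x

/-- Total influence of `f`: the average sensitivity over a uniformly random input. -/
noncomputable def influence {n : ℕ} (f : (Fin n → Bool) → Bool) : ℝ :=
  (∑ x : Fin n → Bool, (sensAt f x : ℝ)) / 2 ^ n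

/-- Fourier coefficient of a real-valued function on the Boolean cube. -/
noncomputable def bFourier {n : ℕ} (g : (Fin n → Bool) → ℝ) (S : Finset (Fin n)) : ℝ :=
  (∑ x : Fin n → Bool, g x * (-1 : ℝ) ^ (S.filter fun i => x i = true).card) / 2 ^ n

/-- The `±1`-valued version `1 - 2f` of a `{0,1}`-valued Boolean function. -/
def toPM {n : ℕ} (f : (Fin n → Bool) → Bool) : (Fin n → Bool) → ℝ :=
  fun x => 1 - 2 * (if f x then (1 : ℝ) else 0)

/-- Sparsity of a real-valued function on the Boolean cube: the number of nonzero
Fourier coefficients. -/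
noncomputable def sparsityR {n : ℕ} (g : (Fin n → Bool) → ℝ) : ℕ :=
  letI := Classical.decPred fun S : Finset (Fin n) => bFourier g S ≠ 0
  (Finset.univ.filter fun S : Finset (Fin n) => bFourier g S ≠ 0).card

/-- Sparsity of a `{0,1}`-valued Boolean function, i.e. the sparsity of `1 - 2f`. -/
noncomputable def sparsity {n : ℕ} (f : (Fin n → Bool) → Bool) : ℕ :=
  sparsityR (toPM f)

/-- Evaluation of a multilinear polynomial, given by its coefficients indexed by
monomials (subsets of variables), on a Boolean input. -/
def mlEval {n : ℕ} {R : Type*} [CommRing R] (c : Finset (Fin n) → R) (x : Fin n → Bool) : R :=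
  ∑ S : Finset (Fin n), c S * ∏ i ∈ S, (if x i then (1 : R) else 0)

/-- `c` is the (unique) multilinear polynomial over `R` agreeing with `f` on the cube. -/
def Represents {n : ℕ} {R : Type*} [CommRing R] (c : Finset (Fin n) → R)
    (f : (Fin n → Bool) → Bool) : Prop :=
  ∀ x, mlEval c x = if f x then 1 else 0

/-- The degree of the multilinear polynomial over `R` agreeing with `f`. -/
noncomputable def degRing {n : ℕ} (R : Type*) [CommRing R] (f : (Fin n → Bool) → Bool) : ℕ :=
  sInf {d | ∃ c : Finset (Fin n) → R, Represents c f ∧ ∀ S, c S ≠ 0 → S.card ≤ d}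

/-- Real degree `deg f`. -/
noncomputable def degR {n : ℕ} (f : (Fin n → Bool) → Bool) : ℕ := degRing ℝ f

/-- Degree over `ℤ_m`; `degMod 2 f` is the `𝔽₂`-degree. -/
noncomputable def degMod {n : ℕ} (m : ℕ) (f : (Fin n → Bool) → Bool) : ℕ := degRing (ZMod m) f

/-- Block composition `f ∘ g` of Boolean functions. -/
def comp {m n : ℕ} (f : (Fin m → Bool) → Bool) (g : (Fin n → Bool) → Bool) :
    (Fin (m * n) → Bool) → Bool :=
  fun x => f fun i => g fun j => x (finProdFinEquiv (i, j))

/-- `iterComp h k` is the `(k+1)`-fold composition `h^{∘(k+1)}`. -/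
def iterComp {n : ℕ} (h : (Fin n → Bool) → Bool) : (k : ℕ) → (Fin (n ^ (k + 1)) → Bool) → Bool
  | 0 => fun x => h fun i => x (Fin.cast (pow_one n).symm i)
  | k + 1 => fun x =>
      comp (iterComp h (k)) h fun i => x (Fin.cast (pow_succ n (k + 1)).symm i)

/-- The address function `ADDR₂` on `6` bits: `ADDR₂(x₁,x₂,y₀,y₁,y₂,y₃) = y_{2x₁+x₂}`. -/
def ADDR2 (x : Fin 6 → Bool) : Bool :=
  if x 0 then (if x 1 then x 5 else x 4) else (if x 1 then x 3 else x 2)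

/-- The family `F = {f_k}`: `f₁(x) = x`, and
`f_{k+1}(z, u, v) = f_k(u)` if `z = 0` and `f_k(v)` if `z = 1`,
where `u, v` are disjoint blocks of `2^k - 1` variables.
(`famF 0` is a dummy constant function; the family starts at `k = 1`.) -/
def famF : (k : ℕ) → (Fin (2 ^ k - 1) → Bool) → Bool
  | 0 => fun _ => false
  | 1 => fun x => x ⟨0, by norm_num⟩
  | k + 2 => fun x =>
      if x ⟨0, by
          have h : 1 < 2 ^ (k + 2) := Nat.one_lt_two_pow_iff.mpr (by omega)
          omega⟩ then
        famF (k + 1) (fun j => x ⟨1 + (2 ^ (k + 1) - 1) + (j : ℕ), by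
          have hj := j.isLt
          have h : 2 ^ (k + 2) = 2 * 2 ^ (k + 1) := by ring
          have h1 : 0 < 2 ^ (k + 1) := Nat.two_pow_pos _
          omega⟩)
      else
        famF (k + 1) (fun j => x ⟨1 + (j : ℕ), by
          have hj := j.isLt
          have h : 2 ^ (k + 2) = 2 * 2 ^ (k + 1) := by ring
          have h1 : 0 < 2 ^ (k + 1) := Nat.two_pow_pos _
          omega⟩)

/-!
Along the chain of `σ` the variable `i` queried at the root of a tree switches exactly once, at
step `σ i`. Every other step of the chain stays inside one of the half-cubes `x i = false`,
`x i = true`, where the tree computes its left, respectively right, subtree. Hence the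
alternation `A t` of a tree along the chain satisfies `A t ≤ A t₀ + A t₁ + 1`, and induction on
the tree gives `A t + 1 ≤ 2 ^ (depth t + 1)`.
-/

namespace DTree

variable {n : ℕ}

def complete (f : (Fin n → Bool) → Bool) : List (Fin n) → (Fin n → Bool) → DTree n
  | [], x => leaf (f x)
  | i :: l, x =>
      node i (complete f l (Function.update x i false)) (complete f l (Function.update x i true))

theorem eval_complete (f : (Fin n → Bool) → Bool) (l : List (Fin n)) (x y : Fin n → Bool) :
    (complete f l x).eval y = f fun j => if j ∈ l then y j else x j := by
  induction l generalizing x with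
  | nil => simp [complete, eval]
  | cons i l ih =>
    have hupdate : (fun j => if j ∈ l then y j else Function.update x i (y i) j) =
        fun j => if j ∈ i :: l then y j else x j := by
      funext j
      by_cases hj : j = i <;> by_cases hjl : j ∈ l <;> simp [hj, hjl]
    rw [← hupdate, ← ih]
    cases hyi : y i <;> simp [complete, eval, hyi]

theorem exists_eval_eq (f : (Fin n → Bool) → Bool) : ∃ t : DTree n, t.eval = f :=
  ⟨complete f (List.finRange n) fun _ => false, funext fun y => by simp [eval_complete]⟩

end DTree

theorem exists_eval_eq_depth_eq_DT {n : ℕ} (f : (Fin n → Bool) → Bool) :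
    ∃ t : DTree n, t.eval = f ∧ t.depth = DT f := by
  obtain ⟨t, ht⟩ := DTree.exists_eval_eq f
  obtain ⟨t', ht', hd⟩ : DT f ∈ {d | ∃ t : DTree n, (∀ x, t.eval x = f x) ∧ t.depth = d} :=
    Nat.sInf_mem ⟨t.depth, t, congrFun ht, rfl⟩
  exact ⟨t', funext ht', hd⟩

theorem chainOf_castSucc_apply_eq_succ_apply {n : ℕ} (σ : Equiv.Perm (Fin n)) {i k : Fin n}
    (hk : k ≠ σ i) : chainOf σ k.castSucc i = chainOf σ k.succ i := by
  have hk' : (k : ℕ) ≠ σ i := Fin.val_ne_of_ne hk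
  simp only [chainOf, Fin.val_castSucc, Fin.val_succ, decide_eq_decide]
  omega

theorem altOn_ite_le {n : ℕ} (g₀ g₁ : (Fin n → Bool) → Bool) (i : Fin n)
    (σ : Equiv.Perm (Fin n)) :
    altOn (fun x => if x i then g₁ x else g₀ x) σ ≤ altOn g₀ σ + altOn g₁ σ + 1 := by
  have hsub : (univ.filter fun k : Fin n =>
      (if chainOf σ k.castSucc i then g₁ (chainOf σ k.castSucc) else g₀ (chainOf σ k.castSucc)) ≠
        if chainOf σ k.succ i then g₁ (chainOf σ k.succ) else g₀ (chainOf σ k.succ)) ⊆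
      insert (σ i) ((univ.filter fun k : Fin n =>
          g₀ (chainOf σ k.castSucc) ≠ g₀ (chainOf σ k.succ)) ∪
        univ.filter fun k : Fin n => g₁ (chainOf σ k.castSucc) ≠ g₁ (chainOf σ k.succ)) := by
    intro k hk
    rw [mem_insert]
    by_cases hki : k = σ i
    · exact .inl hki
    refine .inr ?_
    simp only [mem_union, mem_filter, mem_univ, true_and] at hk ⊢
    rw [chainOf_castSucc_apply_eq_succ_apply σ hki] at hk
    cases hb : chainOf σ k.succ i <;> simp only [hb] at hk
    exacts [.inl hk, .inr hk]
  calc altOn (fun x => if x i then g₁ x else g₀ x) σ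
      ≤ _ := card_le_card hsub
    _ ≤ _ := card_insert_le _ _
    _ ≤ altOn g₀ σ + altOn g₁ σ + 1 := Nat.add_le_add_right (card_union_le _ _) 1

theorem DTree.altOn_eval_add_one_le {n : ℕ} (t : DTree n) (σ : Equiv.Perm (Fin n)) :
    altOn t.eval σ + 1 ≤ 2 ^ (t.depth + 1) := by
  induction t with
  | leaf b => simp [altOn, eval, depth]
  | node i t₀ t₁ ih₀ ih₁ =>
    have hnode := altOn_ite_le t₀.eval t₁.eval i σ
    have h₀ : 2 ^ (t₀.depth + 1) ≤ 2 ^ (max t₀.depth t₁.depth + 1) :=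
      Nat.pow_le_pow_right two_pos (by omega)
    have h₁ : 2 ^ (t₁.depth + 1) ≤ 2 ^ (max t₀.depth t₁.depth + 1) :=
      Nat.pow_le_pow_right two_pos (by omega)
    rw [depth, pow_succ]
    exact (Nat.add_le_add_right hnode 1).trans (by omega)

/-- For every Boolean function `f : {0,1}ⁿ → {0,1}`,
`alt f ≤ 2 ^ (DT f + 1) - 1`. -/
theorem alt_le_two_pow_DT_succ_sub_one {n : ℕ} (f : (Fin n → Bool) → Bool) :
    alt f ≤ 2 ^ (DT f + 1) - 1 := by
  obtain ⟨t, rfl, hdepth⟩ := exists_eval_eq_depth_eq_DT f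
  refine Finset.sup_le fun σ _ => ?_
  have h := t.altOn_eval_add_one_le σ
  rw [hdepth] at h
  omega
end

section
/- For every k ≥ 1, the function f_k in the family F satisfies alt(f_k) = 2^k − 1, i.e. alt(f_k) = 2^{DT(f_k)} − 1. -/
open Finset

/-!
Setting the variables of `f_k` to `1` in in-order (left subtree, root, right subtree) makes
`f_k` change its value at every one of the `2 ^ k - 1` steps, so `alt f_k = 2 ^ k - 1`.
The same chain shows that `f_k` is sensitive to each of its variables; a decision tree of
depth `d` queries fewer than `2 ^ d` variables, so `DT f_k ≥ k`, and the full tree of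
depth `k` computes `f_k`.
-/

section Chains

variable {n : ℕ}

theorem altOn_le (f : (Fin n → Bool) → Bool) (σ : Equiv.Perm (Fin n)) : altOn f σ ≤ n :=
  (card_filter_le _ _).trans_eq (card_fin n)

theorem chainOf_succ (σ : Equiv.Perm (Fin n)) (k : Fin n) :
    chainOf σ k.succ = flipBit (chainOf σ k.castSucc) (σ.symm k) := by
  funext i
  by_cases hi : i = σ.symm k
  · subst hi
    simp [chainOf, flipBit]
  · have hk : (σ i : ℕ) ≠ k := fun h => hi (σ.eq_symm_apply.mpr (Fin.ext h))
    simp only [chainOf, flipBit, Function.update_of_ne hi, Fin.val_succ, Fin.val_castSucc]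
    grind

def IsAlternatingChain (f : (Fin n → Bool) → Bool) (σ : Equiv.Perm (Fin n)) : Prop :=
  ∀ t : Fin (n + 1), f (chainOf σ t) = decide ((t : ℕ) % 2 = 1)

variable {f : (Fin n → Bool) → Bool} {σ : Equiv.Perm (Fin n)}

theorem IsAlternatingChain.ne_succ (h : IsAlternatingChain f σ) (k : Fin n) :
    f (chainOf σ k.castSucc) ≠ f (chainOf σ k.succ) := by
  rw [h, h]
  simp only [Fin.val_castSucc, Fin.val_succ, ne_eq, decide_eq_decide]
  omega

theorem IsAlternatingChain.alt_eq (h : IsAlternatingChain f σ) : alt f = n := by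
  refine le_antisymm (Finset.sup_le fun τ _ => altOn_le f τ) ?_
  calc n = altOn f σ := by
        rw [altOn, filter_true_of_mem fun k _ => h.ne_succ k, card_univ, Fintype.card_fin]
    _ ≤ alt f := le_sup (mem_univ σ)

theorem IsAlternatingChain.exists_flipBit_ne (h : IsAlternatingChain f σ) (i : Fin n) :
    ∃ x, f (flipBit x i) ≠ f x := by
  refine ⟨chainOf σ (σ i).castSucc, fun hx => h.ne_succ (σ i) ?_⟩
  rw [chainOf_succ, Equiv.symm_apply_apply, hx]

end Chains

namespace DTree

variable {m n : ℕ}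

def rmap (e : Fin m → Fin n) : DTree m → DTree n
  | leaf b => leaf b
  | node i t0 t1 => node (e i) (rmap e t0) (rmap e t1)

theorem eval_rmap (e : Fin m → Fin n) (t : DTree m) (x : Fin n → Bool) :
    (t.rmap e).eval x = t.eval (x ∘ e) := by
  induction t with
  | leaf b => rfl
  | node i t0 t1 h0 h1 => simp [rmap, eval, h0, h1]

theorem depth_rmap (e : Fin m → Fin n) (t : DTree m) : (t.rmap e).depth = t.depth := by
  induction t with
  | leaf b => rfl
  | node i t0 t1 h0 h1 => simp [rmap, depth, h0, h1]

def vars : DTree n → Finset (Fin n)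
  | leaf _ => ∅
  | node i t0 t1 => insert i (vars t0 ∪ vars t1)

theorem card_vars_lt_two_pow_depth (t : DTree n) : #t.vars < 2 ^ t.depth := by
  induction t with
  | leaf b => simp [vars, depth]
  | node i t0 t1 h0 h1 =>
    have h0' : 2 ^ t0.depth ≤ 2 ^ max t0.depth t1.depth :=
      Nat.pow_le_pow_right two_pos (le_max_left _ _)
    have h1' : 2 ^ t1.depth ≤ 2 ^ max t0.depth t1.depth :=
      Nat.pow_le_pow_right two_pos (le_max_right _ _)
    calc #(insert i (t0.vars ∪ t1.vars))
        ≤ #t0.vars + #t1.vars + 1 := (card_insert_le _ _).trans (by grind [card_union_le])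
      _ < 2 ^ (max t0.depth t1.depth + 1) := by rw [pow_succ]; omega

theorem eval_congr_of_vars (t : DTree n) {x y : Fin n → Bool}
    (h : ∀ i ∈ t.vars, x i = y i) : t.eval x = t.eval y := by
  induction t with
  | leaf b => rfl
  | node i t0 t1 h0 h1 =>
    simp only [vars, mem_insert, mem_union] at h
    simp only [eval, h i (Or.inl rfl), h0 fun j hj => h j (by simp [hj]),
      h1 fun j hj => h j (by simp [hj])]

theorem mem_vars_of_eval_flipBit_ne (t : DTree n) {x : Fin n → Bool} {i : Fin n}
    (h : t.eval (flipBit x i) ≠ t.eval x) : i ∈ t.vars := by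
  by_contra hi
  refine h (t.eval_congr_of_vars fun j hj => ?_)
  rw [flipBit, Function.update_of_ne (ne_of_mem_of_not_mem hj hi)]

/-- A tree computing a function sensitive to all `n` variables queries all of them. -/
theorem lt_two_pow_depth (t : DTree n) {f : (Fin n → Bool) → Bool} (ht : ∀ x, t.eval x = f x)
    (hf : ∀ i, ∃ x, f (flipBit x i) ≠ f x) : n < 2 ^ t.depth := by
  have hvars : univ ⊆ t.vars := fun i _ => by
    obtain ⟨x, hx⟩ := hf i
    exact t.mem_vars_of_eval_flipBit_ne (by rwa [ht, ht])
  simpa using (card_le_card hvars).trans_lt t.card_vars_lt_two_pow_depth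

end DTree

theorem DT_eq_depth {n : ℕ} {f : (Fin n → Bool) → Bool} (t : DTree n) (ht : ∀ x, t.eval x = f x)
    (hmin : ∀ t' : DTree n, (∀ x, t'.eval x = f x) → t.depth ≤ t'.depth) :
    DT f = t.depth := by
  refine le_antisymm (Nat.sInf_le ⟨t, ht, rfl⟩) (le_csInf ⟨_, t, ht, rfl⟩ ?_)
  rintro _ ⟨t', ht', rfl⟩
  exact hmin t' ht'

section Selector

/-! Variables of `Fin N` laid out as in `famF`: a root, then a left and a right block. -/

variable {m N : ℕ} (hN : 1 + m + m = N)

def rootIdx : Fin N := ⟨0, by omega⟩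

def leftIdx (j : Fin m) : Fin N := ⟨1 + j, by omega⟩

def rightIdx (j : Fin m) : Fin N := ⟨1 + m + j, by omega⟩

theorem rootIdx_or_leftIdx_or_rightIdx (i : Fin N) :
    i = rootIdx hN ∨ (∃ j, i = leftIdx hN j) ∨ ∃ j, i = rightIdx hN j := by
  rcases Nat.eq_zero_or_pos i with h | h
  · exact .inl (Fin.ext h)
  rcases Nat.lt_or_ge i (1 + m) with h' | h'
  · exact .inr (.inl ⟨⟨i - 1, by omega⟩, Fin.ext (by simp [leftIdx]; omega)⟩)
  · exact .inr (.inr ⟨⟨i - (1 + m), by omega⟩, Fin.ext (by simp [rightIdx]; omega)⟩)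

/-- The in-order position of a variable, if the left and right blocks are each visited in
the order of `σ`. -/
def inorderFun (σ : Equiv.Perm (Fin m)) (i : Fin N) : Fin N :=
  if h0 : (i : ℕ) = 0 then ⟨m, by omega⟩
  else if h1 : (i : ℕ) ≤ m then ⟨σ ⟨i - 1, by omega⟩, by omega⟩
  else ⟨m + 1 + σ ⟨i - (1 + m), by omega⟩, by omega⟩

variable (σ : Equiv.Perm (Fin m))

theorem inorderFun_rootIdx : (inorderFun hN σ (rootIdx hN) : ℕ) = m := by
  simp [inorderFun, rootIdx]

theorem inorderFun_leftIdx (j : Fin m) : (inorderFun hN σ (leftIdx hN j) : ℕ) = σ j := by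
  have hj : 1 + (j : ℕ) ≤ m := by omega
  simp [inorderFun, leftIdx, hj]

theorem inorderFun_rightIdx (j : Fin m) :
    (inorderFun hN σ (rightIdx hN j) : ℕ) = m + 1 + σ j := by
  have hj : ¬1 + m + (j : ℕ) ≤ m := by omega
  simp [inorderFun, rightIdx, hj]

theorem inorderFun_injective : Function.Injective (inorderFun hN σ) := by
  intro a b h
  rw [Fin.ext_iff] at h
  rcases rootIdx_or_leftIdx_or_rightIdx hN a with rfl | ⟨i, rfl⟩ | ⟨i, rfl⟩ <;>
  rcases rootIdx_or_leftIdx_or_rightIdx hN b with rfl | ⟨j, rfl⟩ | ⟨j, rfl⟩ <;>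
  simp only [inorderFun_rootIdx, inorderFun_leftIdx, inorderFun_rightIdx] at h <;>
  first
  | rfl
  | omega
  | rw [σ.injective (Fin.ext (by omega) : σ i = σ j)]

noncomputable def inorderPerm : Equiv.Perm (Fin N) :=
  Equiv.ofBijective _ (Finite.injective_iff_bijective.mp (inorderFun_injective hN σ))

theorem chainOf_inorderPerm_rootIdx (t : Fin (N + 1)) :
    chainOf (inorderPerm hN σ) t (rootIdx hN) = decide (m < t) := by
  simp [chainOf, inorderPerm, inorderFun_rootIdx]

theorem chainOf_inorderPerm_leftIdx (t : Fin (N + 1)) (ht : (t : ℕ) ≤ m) :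
    (fun j => chainOf (inorderPerm hN σ) t (leftIdx hN j)) = chainOf σ ⟨t, by omega⟩ := by
  funext j
  simp [chainOf, inorderPerm, inorderFun_leftIdx]

theorem chainOf_inorderPerm_rightIdx (t : Fin (N + 1)) (ht : m < t) :
    (fun j => chainOf (inorderPerm hN σ) t (rightIdx hN j)) =
      chainOf σ ⟨t - (m + 1), by omega⟩ := by
  funext j
  simp only [chainOf, inorderPerm, Equiv.ofBijective_apply, inorderFun_rightIdx, decide_eq_decide]
  omega

end Selector

theorem one_add_two_pow_sub_one_add (k : ℕ) :
    1 + (2 ^ (k + 1) - 1) + (2 ^ (k + 1) - 1) = 2 ^ (k + 2) - 1 := by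
  have : 0 < 2 ^ (k + 1) := Nat.two_pow_pos _
  rw [pow_succ 2 (k + 1)]
  omega

theorem famF_add_two (k : ℕ) (x : Fin (2 ^ (k + 2) - 1) → Bool) :
    famF (k + 2) x =
      if x (rootIdx (one_add_two_pow_sub_one_add k)) then
        famF (k + 1) fun j => x (rightIdx (one_add_two_pow_sub_one_add k) j)
      else famF (k + 1) fun j => x (leftIdx (one_add_two_pow_sub_one_add k) j) :=
  rfl

def famFTree : (k : ℕ) → DTree (2 ^ (k + 1) - 1)
  | 0 => .node ⟨0, by norm_num⟩ (.leaf false) (.leaf true)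
  | k + 1 => .node (rootIdx (one_add_two_pow_sub_one_add k))
      ((famFTree k).rmap (leftIdx (one_add_two_pow_sub_one_add k)))
      ((famFTree k).rmap (rightIdx (one_add_two_pow_sub_one_add k)))

theorem depth_famFTree (k : ℕ) : (famFTree k).depth = k + 1 := by
  induction k with
  | zero => rfl
  | succ k ih => simp [famFTree, DTree.depth, DTree.depth_rmap, ih]

theorem eval_famFTree (k : ℕ) (x : Fin (2 ^ (k + 1) - 1) → Bool) :
    (famFTree k).eval x = famF (k + 1) x := by
  induction k with
  | zero => simp [famFTree, DTree.eval, famF]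
  | succ k ih =>
    rw [famF_add_two]
    simp only [famFTree, DTree.eval, DTree.eval_rmap, ih]
    rfl

/-- Since `2 ^ (k + 1) - 1` is odd, `famF (k + 1)` has just turned `true` on the left block
when the root switches it to the right block, where it starts again at `false`. -/
theorem exists_isAlternatingChain_famF (k : ℕ) :
    ∃ σ, IsAlternatingChain (famF (k + 1)) σ := by
  induction k with
  | zero =>
    exact ⟨1, by unfold IsAlternatingChain; decide⟩
  | succ k ih =>
    obtain ⟨σ, hσ⟩ := ih
    have hN := one_add_two_pow_sub_one_add k
    refine ⟨inorderPerm hN σ, fun t => ?_⟩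
    rw [famF_add_two, chainOf_inorderPerm_rootIdx]
    have hpow : 2 ^ (k + 1) = 2 * 2 ^ k := pow_succ' 2 k
    by_cases ht : 2 ^ (k + 1) - 1 < (t : ℕ)
    · rw [decide_eq_true ht, if_pos rfl, chainOf_inorderPerm_rightIdx hN σ t ht, hσ]
      simp only [decide_eq_decide]
      omega
    · rw [decide_eq_false ht, if_neg Bool.false_ne_true,
        chainOf_inorderPerm_leftIdx hN σ t (not_lt.mp ht), hσ]

theorem DT_famF (k : ℕ) : DT (famF (k + 1)) = k + 1 := by
  obtain ⟨σ, hσ⟩ := exists_isAlternatingChain_famF k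
  refine (DT_eq_depth _ (eval_famFTree k) fun t ht => ?_).trans (depth_famFTree k)
  have hlt := t.lt_two_pow_depth ht hσ.exists_flipBit_ne
  rw [depth_famFTree, ← Nat.pow_le_pow_iff_right one_lt_two]
  omega

/-- For every `k ≥ 1`, the function `f_k` of the family `F`
satisfies `alt (f_k) = 2 ^ k - 1`, i.e. `alt (f_k) = 2 ^ DT (f_k) - 1`. -/
theorem alt_famF_eq (k : ℕ) (hk : 1 ≤ k) :
    alt (famF k) = 2 ^ k - 1 ∧ alt (famF k) = 2 ^ DT (famF k) - 1 := by
  obtain ⟨k, rfl⟩ := Nat.exists_eq_add_of_le' hk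
  obtain ⟨σ, hσ⟩ := exists_isAlternatingChain_famF k
  rw [hσ.alt_eq, DT_famF]
  exact ⟨rfl, rfl⟩
end

section
/- For any Boolean functions g:{0,1}^n→{0,1} with g(0^n) ≠ g(1^n) and f:{0,1}^m→{0,1}, the composition satisfies alt(f ∘ g) ≥ alt(f) · alt(g). -/
open Finset

/-!
Given chains of `f` and `g`, walk through the blocks of `f ∘ g` in the order of the chain of `f`,
flipping each block along the chain of `g`. While block `a` is being flipped, the blocks before it
have value `g 1ⁿ`, those after it `g 0ⁿ`, so `f ∘ g` depends on block `a` only through a function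
`Bool → Bool` of its `g`-value. Whenever this function is not constant, it is injective and every
alternation of `g` in block `a` is an alternation of `f ∘ g`; it is not constant exactly at the
alternations of `y ↦ f (i ↦ if y i then g 1ⁿ else g 0ⁿ)`, which is `f` or `f` with all inputs negated,
and negating the inputs of `f` preserves `alt f` (reverse the chain).
-/

open Equiv

lemma Bool.injective_of_apply_ne {h : Bool → Bool} {u v : Bool} (huv : h u ≠ h v) :
    Function.Injective h := by
  intro x y hxy
  cases u <;> cases v <;> cases x <;> cases y <;> simp_all

section Reversal

variable {m : ℕ}

lemma not_chainOf_trans_revPerm (σ : Perm (Fin m)) (t : Fin (m + 1)) :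
    (fun i => !chainOf (σ.trans Fin.revPerm) t i) = chainOf σ t.rev := by
  funext i
  have := (σ i).isLt
  simp only [chainOf, Equiv.trans_apply, Fin.revPerm_apply, Fin.val_rev, ← decide_not,
    decide_eq_decide]
  omega

lemma altOn_comp_not (f : (Fin m → Bool) → Bool) (σ : Perm (Fin m)) :
    altOn (fun x => f fun i => !x i) (σ.trans Fin.revPerm) = altOn f σ := by
  simp only [altOn, Finset.card_filter, not_chainOf_trans_revPerm]
  rw [← Equiv.sum_comp Fin.revPerm]
  simp [Fin.rev_castSucc, Fin.rev_succ, ne_comm]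

lemma alt_le_alt_comp_not (f : (Fin m → Bool) → Bool) :
    alt f ≤ alt (fun x => f fun i => !x i) :=
  Finset.sup_le fun σ _ => altOn_comp_not f σ ▸ Finset.le_sup (Finset.mem_univ _)

lemma alt_le_alt_comp_ite (f : (Fin m → Bool) → Bool) {lo hi : Bool} (h : lo ≠ hi) :
    alt f ≤ alt (fun y => f fun i => if y i then hi else lo) := by
  cases lo <;> cases hi <;> simp at h ⊢
  exact alt_le_alt_comp_not f

end Reversal

section Composition

variable {m n : ℕ}

def prodPerm (σ : Perm (Fin m)) (τ : Perm (Fin n)) : Perm (Fin (m * n)) :=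
  finProdFinEquiv.symm.trans ((σ.prodCongr τ).trans finProdFinEquiv)

lemma prodPerm_apply_val (σ : Perm (Fin m)) (τ : Perm (Fin n)) (i : Fin m) (j : Fin n) :
    (prodPerm σ τ (finProdFinEquiv (i, j)) : ℕ) = τ j + n * σ i := by
  simp [prodPerm, finProdFinEquiv_apply_val]

lemma Nat.add_mul_lt_add_mul_iff_lex {n i a j c : ℕ} (hj : j < n) (hc : c ≤ n) :
    j + n * i < c + n * a ↔ i < a ∨ i = a ∧ j < c := by
  rcases lt_trichotomy i a with h | rfl | h
  · have := Nat.mul_le_mul_left n h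
    simp only [h, true_or, iff_true]
    nlinarith
  · simp
  · have := Nat.mul_le_mul_left n h
    simp only [h.ne', h.not_gt, false_or, false_and, iff_false, not_lt]
    nlinarith

def chainSlice (f : (Fin m → Bool) → Bool) (σ : Perm (Fin m)) (lo hi : Bool) (a : ℕ)
    (v : Bool) : Bool :=
  f fun i => if (σ i : ℕ) < a then hi else if (σ i : ℕ) = a then v else lo

lemma comp_chainOf_prodPerm (f : (Fin m → Bool) → Bool) (g : (Fin n → Bool) → Bool)
    (σ : Perm (Fin m)) (τ : Perm (Fin n)) (a : Fin m) (c : Fin (n + 1)) (t : Fin (m * n + 1))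
    (ht : (t : ℕ) = c + n * a) :
    comp f g (chainOf (prodPerm σ τ) t) =
      chainSlice f σ (g fun _ => false) (g fun _ => true) a (g (chainOf τ c)) := by
  simp only [comp, chainSlice, chainOf, prodPerm_apply_val, ht,
    Nat.add_mul_lt_add_mul_iff_lex (τ _).isLt (Nat.lt_succ_iff.mp c.isLt)]
  congr 1
  funext i
  rcases lt_trichotomy (σ i : ℕ) a with h | h | h
  · simp [h]
  · simp [h]; rfl
  · simp [h.ne', h.not_gt]

lemma chainSlice_lo (f : (Fin m → Bool) → Bool) (σ : Perm (Fin m)) (lo hi : Bool) (a : Fin m) :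
    chainSlice f σ lo hi a lo = f fun i => if chainOf σ a.castSucc i then hi else lo := by
  unfold chainSlice chainOf
  congr 1
  funext i
  by_cases h : (σ i : ℕ) < a <;> simp [h]

lemma chainSlice_hi (f : (Fin m → Bool) → Bool) (σ : Perm (Fin m)) (lo hi : Bool) (a : Fin m) :
    chainSlice f σ lo hi a hi = f fun i => if chainOf σ a.succ i then hi else lo := by
  unfold chainSlice chainOf
  congr 1
  funext i
  rcases lt_trichotomy (σ i : ℕ) a with h | h | h
  · simp [h, Nat.lt_succ_of_lt h]
  · simp [h]
  · simp [h.ne', h.not_gt, Nat.lt_succ_iff.not.mpr h.not_ge]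

lemma altOn_comp_prodPerm (f : (Fin m → Bool) → Bool) (g : (Fin n → Bool) → Bool)
    (σ : Perm (Fin m)) (τ : Perm (Fin n)) :
    altOn (comp f g) (prodPerm σ τ) = ∑ a : Fin m,
      (Finset.univ.filter fun b : Fin n =>
        chainSlice f σ (g fun _ => false) (g fun _ => true) a (g (chainOf τ b.castSucc)) ≠
        chainSlice f σ (g fun _ => false) (g fun _ => true) a (g (chainOf τ b.succ))).card := by
  simp only [altOn, Finset.card_filter]
  rw [← Equiv.sum_comp finProdFinEquiv, Fintype.sum_prod_type]
  refine Finset.sum_congr rfl fun a _ => Finset.sum_congr rfl fun b _ => ?_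
  rw [comp_chainOf_prodPerm f g σ τ a b.castSucc, comp_chainOf_prodPerm f g σ τ a b.succ]
  · simp [finProdFinEquiv_apply_val]; omega
  · simp [finProdFinEquiv_apply_val]

lemma altOn_mul_altOn_le_altOn_comp (f : (Fin m → Bool) → Bool) (g : (Fin n → Bool) → Bool)
    (σ : Perm (Fin m)) (τ : Perm (Fin n)) :
    altOn (fun y => f fun i => if y i then g (fun _ => true) else g (fun _ => false)) σ *
      altOn g τ ≤ altOn (comp f g) (prodPerm σ τ) := by
  set slice := chainSlice f σ (g fun _ => false) (g fun _ => true)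
  have block : ∀ a : Fin m,
      (if slice a (g fun _ => false) ≠ slice a (g fun _ => true) then 1 else 0) * altOn g τ ≤
        (Finset.univ.filter fun b : Fin n =>
          slice a (g (chainOf τ b.castSucc)) ≠ slice a (g (chainOf τ b.succ))).card := by
    intro a
    split_ifs with hslice
    · rw [one_mul, altOn]
      exact (congrArg Finset.card <| Finset.filter_congr fun b _ =>
        (Bool.injective_of_apply_ne hslice).ne_iff.symm).le
    · simp
  calc _ = ∑ a : Fin m,
        (if slice a (g fun _ => false) ≠ slice a (g fun _ => true) then 1 else 0) * altOn g τ := by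
        rw [← Finset.sum_mul, ← Finset.card_filter, altOn]
        simp only [slice, chainSlice_lo, chainSlice_hi]
    _ ≤ _ := Finset.sum_le_sum fun a _ => block a
    _ = _ := (altOn_comp_prodPerm f g σ τ).symm

end Composition

/-- For any Boolean functions `g : {0,1}ⁿ → {0,1}` with
`g 0ⁿ ≠ g 1ⁿ` and `f : {0,1}ᵐ → {0,1}`, `alt (f ∘ g) ≥ alt f * alt g`. -/
theorem alt_comp_ge {m n : ℕ} (f : (Fin m → Bool) → Bool) (g : (Fin n → Bool) → Bool)
    (hg : g (fun _ => false) ≠ g (fun _ => true)) :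
    alt f * alt g ≤ alt (comp f g) := by
  set f' := fun y : Fin m → Bool =>
    f fun i => if y i then g (fun _ => true) else g (fun _ => false)
  obtain ⟨σ, -, hσ⟩ := Finset.exists_mem_eq_sup _ Finset.univ_nonempty (altOn f')
  obtain ⟨τ, -, hτ⟩ := Finset.exists_mem_eq_sup _ Finset.univ_nonempty (altOn g)
  calc alt f * alt g ≤ alt f' * alt g := Nat.mul_le_mul_right _ (alt_le_alt_comp_ite f hg)
    _ = altOn f' σ * altOn g τ := by rw [alt, alt, hσ, hτ]
    _ ≤ altOn (comp f g) (prodPerm σ τ) := altOn_mul_altOn_le_altOn_comp f g σ τ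
    _ ≤ alt (comp f g) := Finset.le_sup (Finset.mem_univ _)
end

section
/- The address function ADDR_2 satisfies s(ADDR_2) = 3 and alt(ADDR_2) ≥ 5. -/
open Finset

lemma sensAt_le_card_of_flipBit_eq {n : ℕ} {f : (Fin n → Bool) → Bool} {x : Fin n → Bool}
    (s : Finset (Fin n)) (hs : ∀ i ∉ s, f (flipBit x i) = f x) : sensAt f x ≤ s.card :=
  Finset.card_le_card fun i hi => by
    by_contra his
    exact (Finset.mem_filter.mp hi).2 (hs i his)

/-- The coordinate of `y_{2x₁+x₂}`. -/
def addrIndex (x : Fin 6 → Bool) : Fin 6 :=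
  if x 0 then (if x 1 then 5 else 4) else (if x 1 then 3 else 2)

lemma ADDR2_eq_apply_addrIndex (x : Fin 6 → Bool) : ADDR2 x = x (addrIndex x) := by
  unfold ADDR2 addrIndex
  split_ifs <;> rfl

lemma ADDR2_flipBit_eq {x : Fin 6 → Bool} {i : Fin 6}
    (hi : i ∉ ({0, 1, addrIndex x} : Finset (Fin 6))) :
    ADDR2 (flipBit x i) = ADDR2 x := by
  simp only [Finset.mem_insert, Finset.mem_singleton, not_or] at hi
  obtain ⟨h0, h1, hy⟩ := hi
  have hflip : ∀ j, j ≠ i → flipBit x i j = x j := fun j hj => Function.update_of_ne hj _ _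
  have haddr : addrIndex (flipBit x i) = addrIndex x := by
    simp only [addrIndex, hflip 0 (Ne.symm h0), hflip 1 (Ne.symm h1)]
  rw [ADDR2_eq_apply_addrIndex, ADDR2_eq_apply_addrIndex, haddr, hflip _ (Ne.symm hy)]

lemma sensAt_ADDR2_le (x : Fin 6 → Bool) : sensAt ADDR2 x ≤ 3 :=
  (sensAt_le_card_of_flipBit_eq _ fun _ => ADDR2_flipBit_eq).trans Finset.card_le_three

/-- The chain switching on `y₀, x₂, y₁, x₁, y₃, y₂` in this order; `ADDR2` reads
`0, 1, 0, 1, 0, 1, 1` along it. -/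
def addrAlternatingChain : Equiv.Perm (Fin 6) :=
  ⟨![3, 1, 0, 2, 5, 4], ![2, 1, 3, 0, 5, 4], by decide, by decide⟩

/-- The address function `ADDR₂` satisfies `s (ADDR₂) = 3` and
`alt (ADDR₂) ≥ 5`. -/
theorem sens_alt_ADDR2 : sens ADDR2 = 3 ∧ 5 ≤ alt ADDR2 := by
  refine ⟨le_antisymm (Finset.sup_le fun x _ => sensAt_ADDR2_le x) ?_, ?_⟩
  · -- at `y₀ = 1` and all other bits `0`, flipping `x₁`, `x₂` or `y₀` changes the output
    calc 3 = sensAt ADDR2 ![false, false, true, false, false, false] := by decide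
      _ ≤ sens ADDR2 := Finset.le_sup (Finset.mem_univ _)
  · calc 5 = altOn ADDR2 addrAlternatingChain := by decide
      _ ≤ alt ADDR2 := Finset.le_sup (Finset.mem_univ _)
end

section
/- Let f:{0,1}^n→{0,1} depend on all its inputs. Then deg(f) · √(sparsity(f)) ≥ n. -/
open Finset

/-! With `g = 1 - 2f` and `W` its Fourier support, put `rᵢ = #{S ∈ W | i ∈ S}` and
`Qᵢ = Σ_{S ∈ W, i ∈ S} ĝ(S)²`. Since `g x - g (x ⊕ eᵢ) = Σ_{S ∈ W, i ∈ S} 2 ĝ(S) χ_S(x)` takes the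
value `±2` somewhere, Cauchy–Schwarz gives `rᵢ Qᵢ ≥ 1`. Every `S ∈ W` has `|S| ≤ deg f`, so double
counting gives `Σ rᵢ ≤ deg f · sparsity f` and, with Parseval, `Σ Qᵢ ≤ deg f`. Hence
`n ≤ Σ √(rᵢ Qᵢ) ≤ √(Σ rᵢ) √(Σ Qᵢ) ≤ deg f · √(sparsity f)`. -/

section BooleanCube

variable {n : ℕ}

lemma flipBit_apply_self (x : Fin n → Bool) (i : Fin n) : flipBit x i i = !x i :=
  Function.update_self ..

lemma flipBit_apply_of_ne (x : Fin n → Bool) {i j : Fin n} (h : j ≠ i) : flipBit x i j = x j :=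
  Function.update_of_ne h ..

lemma flipBit_involutive (i : Fin n) : Function.Involutive fun x => flipBit x i := by
  intro x
  funext j
  by_cases h : j = i
  · subst h
    simp [flipBit_apply_self]
  · simp only [flipBit_apply_of_ne _ h]

def bChar (S : Finset (Fin n)) (x : Fin n → Bool) : ℝ :=
  (-1) ^ (S.filter fun i => x i = true).card

lemma bFourier_eq_sum_mul_bChar (g : (Fin n → Bool) → ℝ) (S : Finset (Fin n)) :
    bFourier g S = (∑ x, g x * bChar S x) / 2 ^ n :=
  rfl

lemma bChar_eq_prod (S : Finset (Fin n)) (x : Fin n → Bool) :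
    bChar S x = ∏ i ∈ S, if x i then -1 else 1 := by
  rw [bChar, ← prod_const, prod_filter]

lemma bChar_sq (S : Finset (Fin n)) (x : Fin n → Bool) : bChar S x ^ 2 = 1 := by
  rw [bChar, ← pow_mul, mul_comm, pow_mul, neg_one_sq, one_pow]

lemma bChar_flipBit (S : Finset (Fin n)) (x : Fin n → Bool) (i : Fin n) :
    bChar S (flipBit x i) = (if i ∈ S then -1 else 1) * bChar S x := by
  have off_i : ∀ j ∈ S.erase i,
      (if flipBit x i j then (-1 : ℝ) else 1) = if x j then -1 else 1 := fun j hj => by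
    rw [flipBit_apply_of_ne x (ne_of_mem_erase hj)]
  rw [bChar_eq_prod, bChar_eq_prod]
  by_cases hi : i ∈ S
  · rw [← mul_prod_erase S _ hi, ← mul_prod_erase S _ hi, prod_congr rfl off_i,
      flipBit_apply_self, if_pos hi, ← mul_assoc]
    cases x i <;> simp
  · rw [if_neg hi, one_mul, ← erase_eq_of_notMem hi, prod_congr rfl off_i]

lemma sum_bChar_mul_bChar (x y : Fin n → Bool) :
    ∑ S, bChar S x * bChar S y = if x = y then 2 ^ n else 0 := by
  have agree : ∀ S, bChar S x * bChar S y = ∏ i ∈ S, if x i = y i then 1 else -1 := fun S => by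
    rw [bChar_eq_prod, bChar_eq_prod, ← prod_mul_distrib]
    exact prod_congr rfl fun i _ => by cases x i <;> cases y i <;> norm_num
  have factor : ∀ i, (1 : ℝ) + (if x i = y i then 1 else -1) = if x i = y i then 2 else 0 :=
    fun i => by split_ifs <;> norm_num
  simp_rw [agree, ← powerset_univ, ← prod_one_add, factor, Fintype.prod_ite_zero, prod_const,
    card_univ, Fintype.card_fin, funext_iff]

lemma sum_bFourier_mul_bChar (g : (Fin n → Bool) → ℝ) (x : Fin n → Bool) :
    ∑ S, bFourier g S * bChar S x = g x := by
  simp_rw [bFourier_eq_sum_mul_bChar, div_mul_eq_mul_div, ← sum_div, sum_mul]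
  rw [sum_comm]
  simp_rw [mul_assoc, ← mul_sum, sum_bChar_mul_bChar, mul_ite, mul_zero, sum_ite_eq',
    mem_univ, if_true]
  field_simp

lemma sum_sq_eq_two_pow_mul_sum_bFourier_sq (g : (Fin n → Bool) → ℝ) :
    ∑ x, g x ^ 2 = 2 ^ n * ∑ S, bFourier g S ^ 2 := by
  calc ∑ x, g x ^ 2 = ∑ x, g x * ∑ S, bFourier g S * bChar S x := by
        simp_rw [sum_bFourier_mul_bChar, sq]
    _ = ∑ S, bFourier g S * ∑ x, g x * bChar S x := by
        simp_rw [mul_sum]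
        rw [sum_comm]
        exact sum_congr rfl fun _ _ => sum_congr rfl fun _ _ => by ring
    _ = 2 ^ n * ∑ S, bFourier g S ^ 2 := by
        rw [mul_sum]
        refine sum_congr rfl fun S _ => ?_
        rw [bFourier_eq_sum_mul_bChar]
        field_simp

lemma toPM_sq (f : (Fin n → Bool) → Bool) (x : Fin n → Bool) : toPM f x ^ 2 = 1 := by
  unfold toPM
  split_ifs <;> norm_num

lemma sum_bFourier_toPM_sq (f : (Fin n → Bool) → Bool) : ∑ S, bFourier (toPM f) S ^ 2 = 1 := by
  have h := sum_sq_eq_two_pow_mul_sum_bFourier_sq (toPM f)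
  simp only [toPM_sq, sum_const, card_univ, Fintype.card_fun, Fintype.card_bool,
    Fintype.card_fin, nsmul_eq_mul, mul_one, Nat.cast_pow, Nat.cast_ofNat] at h
  exact (mul_eq_left₀ (by positivity)).1 h.symm

noncomputable def fourierSupport (g : (Fin n → Bool) → ℝ) : Finset (Finset (Fin n)) :=
  letI := Classical.decPred fun S : Finset (Fin n) => bFourier g S ≠ 0
  univ.filter fun S => bFourier g S ≠ 0

lemma mem_fourierSupport {g : (Fin n → Bool) → ℝ} {S : Finset (Fin n)} :
    S ∈ fourierSupport g ↔ bFourier g S ≠ 0 := by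
  simp [fourierSupport]

lemma sparsityR_eq_card_fourierSupport (g : (Fin n → Bool) → ℝ) :
    sparsityR g = #(fourierSupport g) :=
  rfl

lemma sum_fourierSupport_bFourier_sq (g : (Fin n → Bool) → ℝ) :
    ∑ S ∈ fourierSupport g, bFourier g S ^ 2 = ∑ S, bFourier g S ^ 2 :=
  sum_subset (subset_univ _) fun S _ hS => by
    rw [mem_fourierSupport, not_not] at hS
    simp [hS]

lemma sub_flipBit_eq_sum_bFourier_mul_bChar (g : (Fin n → Bool) → ℝ) (i : Fin n)
    (x : Fin n → Bool) :
    g x - g (flipBit x i) = ∑ S ∈ fourierSupport g with i ∈ S, 2 * bFourier g S * bChar S x := by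
  rw [← sum_bFourier_mul_bChar g x, ← sum_bFourier_mul_bChar g (flipBit x i), ← sum_sub_distrib,
    sum_filter]
  refine (sum_subset (subset_univ _) fun S _ hS => ?_).symm.trans (sum_congr rfl fun S _ => ?_)
  · rw [mem_fourierSupport, not_not] at hS
    simp [hS]
  · rw [bChar_flipBit]
    split_ifs <;> ring

lemma one_le_card_mul_sum_bFourier_sq (f : (Fin n → Bool) → Bool) {i : Fin n}
    (hi : ∃ x, f (flipBit x i) ≠ f x) :
    1 ≤ (#{S ∈ fourierSupport (toPM f) | i ∈ S} : ℝ) *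
      ∑ S ∈ fourierSupport (toPM f) with i ∈ S, bFourier (toPM f) S ^ 2 := by
  obtain ⟨x, hx⟩ := hi
  have jump : (toPM f x - toPM f (flipBit x i)) ^ 2 = 4 := by
    unfold toPM
    revert hx
    cases f x <;> cases f (flipBit x i) <;> norm_num
  have cs := sq_sum_le_card_mul_sum_sq (s := {S ∈ fourierSupport (toPM f) | i ∈ S})
    (f := fun S => 2 * bFourier (toPM f) S * bChar S x)
  simp_rw [← sub_flipBit_eq_sum_bFourier_mul_bChar, jump, mul_pow, bChar_sq, mul_one,
    ← mul_sum] at cs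
  linarith

lemma sum_mul_bChar_eq_zero_of_flipBit_invariant {g : (Fin n → Bool) → ℝ} {S : Finset (Fin n)}
    {j : Fin n} (hj : j ∈ S) (hg : ∀ x, g (flipBit x j) = g x) :
    ∑ x, g x * bChar S x = 0 := by
  have h := Fintype.sum_equiv (flipBit_involutive j).toPerm (fun x => g x * bChar S x)
    (fun x => g (flipBit x j) * bChar S (flipBit x j)) fun x => by
      simp [(flipBit_involutive j) x]
  simp_rw [hg, bChar_flipBit, if_pos hj, neg_one_mul, mul_neg, sum_neg_distrib] at h
  linarith

lemma bFourier_mlEval_eq_zero {c : Finset (Fin n) → ℝ} {d : ℕ} (hc : ∀ T, c T ≠ 0 → #T ≤ d)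
    {S : Finset (Fin n)} (hS : d < #S) : bFourier (mlEval c) S = 0 := by
  rw [bFourier_eq_sum_mul_bChar]
  refine div_eq_zero_iff.2 (Or.inl ?_)
  simp_rw [mlEval, sum_mul]
  rw [sum_comm]
  refine sum_eq_zero fun T _ => ?_
  by_cases hT : c T = 0
  · simp [hT]
  obtain ⟨j, hjS, hjT⟩ := not_subset.1 fun hST : S ⊆ T => by
    have := card_le_card hST
    have := hc T hT
    omega
  simp_rw [mul_assoc, ← mul_sum]
  rw [sum_mul_bChar_eq_zero_of_flipBit_invariant hjS fun x => ?_, mul_zero]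
  exact prod_congr rfl fun k hk => by rw [flipBit_apply_of_ne x (ne_of_mem_of_not_mem hk hjT)]

lemma mlEval_indicator {K : Type*} [CommRing K] (c : Finset (Fin n) → K) (X : Finset (Fin n)) :
    mlEval c (fun i => decide (i ∈ X)) = ∑ S ∈ Iic X, c S := by
  simp only [mlEval, decide_eq_true_eq, prod_boole, mul_ite, mul_one, mul_zero, Iic_eq_powerset]
  rw [← sum_filter]
  congr 1
  ext S
  simp [subset_iff]

/-- Every function on the cube is a multilinear polynomial: evaluation is injective by Möbius
inversion on the subset lattice, hence surjective by counting dimensions. -/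
lemma mlEval_surjective (K : Type*) [Field K] :
    Function.Surjective (mlEval : (Finset (Fin n) → K) → (Fin n → Bool) → K) := by
  let L : (Finset (Fin n) → K) →ₗ[K] (Fin n → Bool) → K :=
    { toFun := mlEval
      map_add' := fun c c' => by ext x; simp [mlEval, add_mul, sum_add_distrib]
      map_smul' := fun a c => by ext x; simp [mlEval, mul_sum, mul_assoc] }
  have hinj : Function.Injective L := by
    rw [← LinearMap.ker_eq_bot, LinearMap.ker_eq_bot']
    intro c hc
    have hsum : ∀ X, 0 = ∑ S ∈ Iic X, c S := fun X => by
      rw [← mlEval_indicator]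
      exact (congrFun hc _).symm
    funext X
    simp [IncidenceAlgebra.moebius_inversion_bot c 0 hsum X]
  exact (LinearMap.injective_iff_surjective_of_finrank_eq_finrank (by simp)).1 hinj

lemma exists_represents_degR (f : (Fin n → Bool) → Bool) :
    ∃ c : Finset (Fin n) → ℝ, Represents c f ∧ ∀ S, c S ≠ 0 → #S ≤ degR f := by
  obtain ⟨c, hc⟩ := mlEval_surjective ℝ fun x => if f x then (1 : ℝ) else 0
  have hne : {d | ∃ c : Finset (Fin n) → ℝ, Represents c f ∧ ∀ S, c S ≠ 0 → #S ≤ d}.Nonempty :=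
    ⟨n, c, congrFun hc, fun S _ => (card_le_univ S).trans_eq (Fintype.card_fin n)⟩
  exact Nat.sInf_mem hne

lemma card_le_degR_of_bFourier_toPM_ne_zero (f : (Fin n → Bool) → Bool) {S : Finset (Fin n)}
    (hS : bFourier (toPM f) S ≠ 0) : #S ≤ degR f := by
  obtain ⟨c, hc, hdeg⟩ := exists_represents_degR f
  have hpm : toPM f = mlEval fun T => (if T = ∅ then 1 else 0) - 2 * c T := by
    funext x
    simp only [mlEval, sub_mul, sum_sub_distrib, ite_mul, one_mul, zero_mul, sum_ite_eq',
      mem_univ, if_true, prod_empty, mul_assoc, ← mul_sum]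
    rw [← mlEval, hc x, toPM]
  contrapose! hS
  refine hpm ▸ bFourier_mlEval_eq_zero (fun T hT => ?_) hS
  by_cases hT0 : T = ∅
  · simp [hT0]
  · exact hdeg T fun h => hT (by simp [hT0, h])

lemma sum_sum_filter_mem_le {ι : Type*} [Fintype ι] [DecidableEq ι] {W : Finset (Finset ι)}
    {d : ℕ} (hW : ∀ S ∈ W, #S ≤ d) {w : Finset ι → ℝ} (hw : ∀ S ∈ W, 0 ≤ w S) :
    ∑ i, ∑ S ∈ W with i ∈ S, w S ≤ d * ∑ S ∈ W, w S := by
  simp_rw [sum_filter]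
  rw [sum_comm, mul_sum]
  refine sum_le_sum fun S hS => ?_
  rw [sum_ite_mem, univ_inter, sum_const, nsmul_eq_mul]
  exact mul_le_mul_of_nonneg_right (by exact_mod_cast hW S hS) (hw S hS)

end BooleanCube

/-- Let `f : {0,1}ⁿ → {0,1}` depend on all its inputs. Then
`deg f * √(sparsity f) ≥ n`. -/
theorem degR_mul_sqrt_sparsity_ge {n : ℕ} (f : (Fin n → Bool) → Bool)
    (hdep : ∀ i : Fin n, ∃ x, f (flipBit x i) ≠ f x) :
    (n : ℝ) ≤ (degR f : ℝ) * Real.sqrt (sparsity f) := by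
  set W := fourierSupport (toPM f)
  set d := degR f
  have hW : ∀ S ∈ W, #S ≤ d := fun S hS =>
    card_le_degR_of_bFourier_toPM_ne_zero f (mem_fourierSupport.1 hS)
  set r : Fin n → ℝ := fun i => #{S ∈ W | i ∈ S}
  set Q : Fin n → ℝ := fun i => ∑ S ∈ W with i ∈ S, bFourier (toPM f) S ^ 2
  have hr : ∑ i, r i ≤ d * sparsity f := by
    simpa [r, sparsity, sparsityR_eq_card_fourierSupport] using
      sum_sum_filter_mem_le hW (w := fun _ => 1) fun _ _ => zero_le_one
  have hQ : ∑ i, Q i ≤ d := by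
    simpa [W, sum_fourierSupport_bFourier_sq, sum_bFourier_toPM_sq] using
      sum_sum_filter_mem_le hW fun S _ => sq_nonneg (bFourier (toPM f) S)
  calc (n : ℝ) = ∑ _i : Fin n, 1 := by simp
    _ ≤ ∑ i, √(r i) * √(Q i) := sum_le_sum fun i _ => by
        rw [← Real.sqrt_mul (Nat.cast_nonneg _)]
        exact Real.one_le_sqrt.2 (one_le_card_mul_sum_bFourier_sq f (hdep i))
    _ ≤ √(∑ i, r i) * √(∑ i, Q i) :=
        Real.sum_sqrt_mul_sqrt_le _ (fun _ => Nat.cast_nonneg _)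
          fun _ => sum_nonneg fun _ _ => sq_nonneg _
    _ ≤ √(d * sparsity f) * √d := by gcongr
    _ = d * √(sparsity f) := by
        rw [Real.sqrt_mul (Nat.cast_nonneg _), mul_right_comm,
          Real.mul_self_sqrt (Nat.cast_nonneg _)]
end

section
/- Let f:{0,1}^n→{0,1} depend on all its inputs. Then s(f) · √(sparsity(f)) ≥ n. -/
open Finset

/-!
Write `g = 1 - 2f` in the Walsh basis `χ_S`. Since `(g x - g (x ⊕ eᵢ)) / 2 = ∑_{S ∋ i} ĝ(S) χ_S(x)`
and the left side is `±1` for some `x` whenever `f` depends on `i`, every variable carries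
`ℓ¹`-weight `∑_{S ∋ i} |ĝ(S)| ≥ 1`; summing over `i` gives `n ≤ ∑_S |S| |ĝ(S)|`. Cauchy–Schwarz
over the support of `ĝ` bounds this by `√(sparsity f) · (∑_S |S|² ĝ(S)²)^{1/2}`. Finally
`∑_S |S| ĝ(S) χ_S = s_f · g` pointwise, so by Parseval `∑_S |S|² ĝ(S)²` is the average of
`s_f(x)²`, which is at most `s(f)²`.
-/

theorem Finset.sum_card_mul_eq_sum_sum_filter_mem {α R : Type*} [Fintype α] [DecidableEq α]
    [NonAssocSemiring R] (a : Finset α → R) :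
    ∑ s, (#s : R) * a s = ∑ i, ∑ s with i ∈ s, a s := by
  simp_rw [sum_filter, card_eq_sum_ones, Nat.cast_sum, Nat.cast_one, sum_mul, one_mul]
  rw [sum_comm]
  simp_rw [← sum_filter, filter_mem_eq_inter, univ_inter]

namespace BooleanFourier

variable {n : ℕ}

def walsh (S : Finset (Fin n)) (x : Fin n → Bool) : ℝ :=
  (-1) ^ #{i ∈ S | x i = true}

lemma bFourier_eq_sum_mul_walsh (g : (Fin n → Bool) → ℝ) (S : Finset (Fin n)) :
    bFourier g S = (∑ x, g x * walsh S x) / 2 ^ n := rfl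

lemma walsh_eq_prod (S : Finset (Fin n)) (x : Fin n → Bool) :
    walsh S x = ∏ i ∈ S, if x i = true then -1 else 1 := by
  rw [prod_ite, prod_const, prod_const, one_pow, mul_one, walsh]

lemma abs_walsh (S : Finset (Fin n)) (x : Fin n → Bool) : |walsh S x| = 1 := by
  simp [walsh]

lemma walsh_mul_self (S : Finset (Fin n)) (x : Fin n → Bool) : walsh S x * walsh S x = 1 := by
  rw [← abs_mul_abs_self, abs_walsh, one_mul]

lemma flipBit_involutive (i : Fin n) : Function.Involutive (flipBit · i) := by
  intro x
  simp [flipBit]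

lemma walsh_flipBit (S : Finset (Fin n)) (x : Fin n → Bool) (i : Fin n) :
    walsh S (flipBit x i) = (if i ∈ S then -1 else 1) * walsh S x := by
  simp only [walsh_eq_prod, flipBit]
  rw [prod_congr rfl fun j _ =>
    Function.apply_update (fun _ b => if b = true then (-1 : ℝ) else 1) x i (!x i) j]
  by_cases hi : i ∈ S
  · rw [prod_update_of_mem hi, ← mul_prod_erase S _ hi, if_pos hi, sdiff_singleton_eq_erase]
    cases x i <;> simp
  · rw [prod_update_of_notMem hi, if_neg hi, one_mul]

-- Flipping a coordinate in `S ∆ T` negates `walsh S * walsh T`, so its sum vanishes.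
theorem sum_walsh_mul_walsh (S T : Finset (Fin n)) :
    ∑ x, walsh S x * walsh T x = if S = T then 2 ^ n else 0 := by
  split_ifs with hST
  · subst hST
    simp [walsh_mul_self]
  · obtain ⟨i, hi⟩ := symmDiff_nonempty.mpr hST
    have hflip : ∀ x, walsh S (flipBit x i) * walsh T (flipBit x i) = -(walsh S x * walsh T x) := by
      intro x
      rw [walsh_flipBit, walsh_flipBit]
      rcases mem_symmDiff.mp hi with ⟨hS, hT⟩ | ⟨hT, hS⟩ <;> simp [hS, hT]
    have := Equiv.sum_comp (flipBit_involutive i).toPerm fun x => walsh S x * walsh T x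
    simp only [Function.Involutive.coe_toPerm, hflip, sum_neg_distrib] at this
    linarith

theorem sum_subsets_walsh_mul_walsh (x y : Fin n → Bool) :
    ∑ S, walsh S x * walsh S y = if x = y then 2 ^ n else 0 := by
  simp only [walsh_eq_prod, ← prod_mul_distrib]
  rw [← powerset_univ, ← prod_one_add]
  split_ifs with hxy
  · subst hxy
    have htwo : ∀ i, 1 + (if x i = true then (-1 : ℝ) else 1) * (if x i = true then -1 else 1)
        = 2 := by
      intro i
      split_ifs <;> norm_num
    rw [prod_congr rfl fun i _ => htwo i, prod_const, card_univ, Fintype.card_fin]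
  · obtain ⟨i, hi⟩ : ∃ i, x i ≠ y i := Function.ne_iff.mp hxy
    apply prod_eq_zero (mem_univ i)
    cases hx : x i <;> cases hy : y i <;> simp_all

theorem sum_bFourier_mul_walsh (g : (Fin n → Bool) → ℝ) (x : Fin n → Bool) :
    ∑ S, bFourier g S * walsh S x = g x := by
  calc ∑ S, bFourier g S * walsh S x
      = (∑ y, g y * ∑ S, walsh S y * walsh S x) / 2 ^ n := by
        simp only [bFourier_eq_sum_mul_walsh, div_mul_eq_mul_div, ← sum_div, sum_mul, mul_sum]
        rw [sum_comm]
        simp only [mul_assoc]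
    _ = g x := by simp [sum_subsets_walsh_mul_walsh]

theorem sum_sq_sum_mul_walsh (c : Finset (Fin n) → ℝ) :
    ∑ x, (∑ S, c S * walsh S x) ^ 2 = 2 ^ n * ∑ S, c S ^ 2 := by
  calc ∑ x, (∑ S, c S * walsh S x) ^ 2
      = ∑ S, ∑ T, c S * c T * ∑ x, walsh S x * walsh T x := by
        simp_rw [sq, sum_mul_sum, mul_sum]
        rw [sum_comm]
        refine sum_congr rfl fun S _ => ?_
        rw [sum_comm]
        simp only [mul_mul_mul_comm]
    _ = 2 ^ n * ∑ S, c S ^ 2 := by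
        simp [sum_walsh_mul_walsh, mul_sum, sq, mul_comm]

theorem sub_flipBit_div_two_eq_sum (g : (Fin n → Bool) → ℝ) (x : Fin n → Bool) (i : Fin n) :
    (g x - g (flipBit x i)) / 2 = ∑ S with i ∈ S, bFourier g S * walsh S x := by
  calc (g x - g (flipBit x i)) / 2
      = (∑ S, bFourier g S * (walsh S x - walsh S (flipBit x i))) / 2 := by
        conv_lhs => rw [← sum_bFourier_mul_walsh g x, ← sum_bFourier_mul_walsh g (flipBit x i)]
        simp only [mul_sub, sum_sub_distrib]
    _ = ∑ S, if i ∈ S then bFourier g S * walsh S x else 0 := by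
        rw [sum_div]
        refine sum_congr rfl fun S _ => ?_
        rw [walsh_flipBit]
        split_ifs <;> ring
    _ = ∑ S with i ∈ S, bFourier g S * walsh S x := (sum_filter _ _).symm

theorem half_abs_sub_flipBit_le_sum_abs_bFourier (g : (Fin n → Bool) → ℝ) (x : Fin n → Bool)
    (i : Fin n) : |g x - g (flipBit x i)| / 2 ≤ ∑ S with i ∈ S, |bFourier g S| := by
  calc |g x - g (flipBit x i)| / 2
      = |∑ S with i ∈ S, bFourier g S * walsh S x| := by
        rw [← sub_flipBit_div_two_eq_sum, abs_div, abs_two]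
    _ ≤ ∑ S with i ∈ S, |bFourier g S| := by
        refine (abs_sum_le_sum_abs _ _).trans_eq (sum_congr rfl fun S _ => ?_)
        rw [abs_mul, abs_walsh, mul_one]

theorem sq_sum_mul_abs_bFourier_le (g : (Fin n → Bool) → ℝ) (w : Finset (Fin n) → ℝ) :
    (∑ S, w S * |bFourier g S|) ^ 2 ≤ sparsityR g * ∑ S, (w S * bFourier g S) ^ 2 := by
  classical
  set N : Finset (Finset (Fin n)) := {S | bFourier g S ≠ 0}
  have hN : sparsityR g = #N := by
    rw [sparsityR]
    congr
  calc (∑ S, w S * |bFourier g S|) ^ 2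
      = (∑ S ∈ N, w S * |bFourier g S|) ^ 2 := by
        rw [sum_filter_of_ne fun S _ h => ?_]
        contrapose! h
        rw [h, abs_zero, mul_zero]
    _ ≤ #N * ∑ S ∈ N, (w S * |bFourier g S|) ^ 2 := sq_sum_le_card_mul_sum_sq
    _ = sparsityR g * ∑ S, (w S * bFourier g S) ^ 2 := by
        simp_rw [hN, mul_pow, sq_abs]
        rw [sum_filter_of_ne fun S _ h => ?_]
        contrapose! h
        rw [h, zero_pow two_ne_zero, mul_zero]

lemma toPM_sq (f : (Fin n → Bool) → Bool) (x : Fin n → Bool) : toPM f x ^ 2 = 1 := by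
  cases h : f x <;> norm_num [toPM, h]

lemma abs_toPM (f : (Fin n → Bool) → Bool) (x : Fin n → Bool) : |toPM f x| = 1 := by
  cases h : f x <;> norm_num [toPM, h]

lemma toPM_sub_toPM_flipBit_div_two (f : (Fin n → Bool) → Bool) (x : Fin n → Bool) (i : Fin n) :
    (toPM f x - toPM f (flipBit x i)) / 2 = if f (flipBit x i) ≠ f x then toPM f x else 0 := by
  cases h1 : f x <;> cases h2 : f (flipBit x i) <;> norm_num [toPM, h1, h2]

theorem sum_card_mul_bFourier_mul_walsh (f : (Fin n → Bool) → Bool) (x : Fin n → Bool) :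
    ∑ S, (#S * bFourier (toPM f) S) * walsh S x = sensAt f x * toPM f x := by
  simp_rw [mul_assoc, sum_card_mul_eq_sum_sum_filter_mem, ← sub_flipBit_div_two_eq_sum,
    toPM_sub_toPM_flipBit_div_two, sum_ite, sum_const_zero, add_zero, sum_const, nsmul_eq_mul,
    sensAt]

theorem sum_sq_card_mul_bFourier_le (f : (Fin n → Bool) → Bool) :
    ∑ S, (#S * bFourier (toPM f) S) ^ 2 ≤ (sens f : ℝ) ^ 2 := by
  have hpoint : ∀ x, (∑ S, (#S * bFourier (toPM f) S) * walsh S x) ^ 2 = (sensAt f x : ℝ) ^ 2 := by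
    intro x
    rw [sum_card_mul_bFourier_mul_walsh, mul_pow, toPM_sq, mul_one]
  have h : 2 ^ n * ∑ S, (#S * bFourier (toPM f) S) ^ 2 ≤ 2 ^ n * (sens f : ℝ) ^ 2 := by
    calc 2 ^ n * ∑ S, (#S * bFourier (toPM f) S) ^ 2 = ∑ x, (sensAt f x : ℝ) ^ 2 := by
          rw [← sum_sq_sum_mul_walsh]
          exact sum_congr rfl fun x _ => hpoint x
      _ ≤ ∑ _x : Fin n → Bool, (sens f : ℝ) ^ 2 := by
          gcongr with x
          exact le_sup (f := fun x => sensAt f x) (mem_univ x)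
      _ = 2 ^ n * (sens f : ℝ) ^ 2 := by simp
  exact le_of_mul_le_mul_left h (by positivity)

theorem card_le_sum_card_mul_abs_bFourier (f : (Fin n → Bool) → Bool)
    (hdep : ∀ i : Fin n, ∃ x, f (flipBit x i) ≠ f x) :
    (n : ℝ) ≤ ∑ S, #S * |bFourier (toPM f) S| := by
  rw [sum_card_mul_eq_sum_sum_filter_mem]
  calc (n : ℝ) = ∑ _i : Fin n, 1 := by simp
    _ ≤ ∑ i, ∑ S with i ∈ S, |bFourier (toPM f) S| := by
        gcongr with i
        obtain ⟨x, hx⟩ := hdep i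
        calc (1 : ℝ) = |toPM f x - toPM f (flipBit x i)| / 2 := by
              rw [← abs_two, ← abs_div, toPM_sub_toPM_flipBit_div_two, if_pos hx, abs_toPM]
          _ ≤ _ := half_abs_sub_flipBit_le_sum_abs_bFourier _ x i

end BooleanFourier

open BooleanFourier in
/-- Let `f : {0,1}ⁿ → {0,1}` depend on all its inputs. Then
`s f * √(sparsity f) ≥ n`. -/
theorem sens_mul_sqrt_sparsity_ge {n : ℕ} (f : (Fin n → Bool) → Bool)
    (hdep : ∀ i : Fin n, ∃ x, f (flipBit x i) ≠ f x) :
    (n : ℝ) ≤ (sens f : ℝ) * Real.sqrt (sparsity f) := by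
  have hsq : (n : ℝ) ^ 2 ≤ (sens f * Real.sqrt (sparsity f)) ^ 2 := by
    rw [mul_pow, Real.sq_sqrt (Nat.cast_nonneg _)]
    calc (n : ℝ) ^ 2 ≤ (∑ S, #S * |bFourier (toPM f) S|) ^ 2 := by
          gcongr
          exact card_le_sum_card_mul_abs_bFourier f hdep
      _ ≤ sparsity f * ∑ S, (#S * bFourier (toPM f) S) ^ 2 :=
          sq_sum_mul_abs_bFourier_le (toPM f) fun S => #S
      _ ≤ sparsity f * (sens f : ℝ) ^ 2 := by
          gcongr
          exact sum_sq_card_mul_bFourier_le f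
      _ = (sens f : ℝ) ^ 2 * sparsity f := mul_comm _ _
  exact (pow_le_pow_iff_left₀ (Nat.cast_nonneg _) (by positivity) two_ne_zero).mp hsq
end
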